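/- For every r ≥ 1, the intersection of the set P(ℚ_p)·I_r with GL_n(ℤ_p) equals I_r^0; that is, an element of GL_n(ℤ_p) can be written as a product p·h with p ∈ P(ℚ_p) block upper triangular invertible and h ∈ I_r if and only if it lies in the P-Iwahori subgroup I_r^0. -/

import Mathlib

/-!
STATEMENT 8: For every r ≥ 1, the intersection of the set P(ℚ_p)·I_r with GL_n(ℤ_p)
equals I_r^0; that is, an element of GL_n(ℤ_p) can be written as a product q·h with
q ∈ P(ℚ_p) block upper triangular invertible and h ∈ I_r if and only if it lies in the
P-Iwahori subgroup I_r^0.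
-/

open Matrix

noncomputable section
namespace PIw

/-- Partial sums of the partition: `Dsum nn j = n_1 + ⋯ + n_j` (`nn` is 0-indexed). -/
def Dsum {t : ℕ} (nn : Fin t → ℕ) (j : ℕ) : ℕ :=
  ∑ i ∈ Finset.range j, if h : i < t then nn ⟨i, h⟩ else 0

/-- Index (0-indexed) of the block containing position `k`. -/
def blkOf {t : ℕ} (nn : Fin t → ℕ) (k : ℕ) : ℕ :=
  ((Finset.range t).filter fun j => Dsum nn (j + 1) ≤ k).card

/-- The block function on `Fin n`. -/
def bfun {t : ℕ} (nn : Fin t → ℕ) : Fin (Dsum nn t) → ℕ := fun k => blkOf nn (k : ℕ)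

/-- Block upper triangular (entries strictly below the diagonal blocks vanish). -/
def IsBlockUpper {t : ℕ} (nn : Fin t → ℕ) {R : Type*} [CommRing R]
    (M : Matrix (Fin (Dsum nn t)) (Fin (Dsum nn t)) R) : Prop :=
  M.BlockTriangular (bfun nn)

/-- Block upper triangular with identity diagonal blocks. -/
def IsBlockUnipotent {t : ℕ} (nn : Fin t → ℕ) {R : Type*} [CommRing R]
    (M : Matrix (Fin (Dsum nn t)) (Fin (Dsum nn t)) R) : Prop :=
  IsBlockUpper nn M ∧
    ∀ k l, bfun nn k = bfun nn l → M k l = if k = l then 1 else 0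

variable (p : ℕ) [Fact p.Prime]

/-- Entrywise reduction mod `p^r`. -/
def redMat (r : ℕ) {N : ℕ} (M : Matrix (Fin N) (Fin N) ℤ_[p]) :
    Matrix (Fin N) (Fin N) (ZMod (p ^ r)) :=
  M.map (PadicInt.toZModPow r)

/-- Membership in the `P`-Iwahori subgroup `I_r^0`. -/
def memIw0 {t : ℕ} (nn : Fin t → ℕ) (r : ℕ) (g : GL (Fin (Dsum nn t)) ℤ_[p]) : Prop :=
  IsBlockUpper nn (redMat p r g.val)

/-- Membership in the pro-`p` `P`-Iwahori subgroup `I_r`. -/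
def memIw {t : ℕ} (nn : Fin t → ℕ) (r : ℕ) (g : GL (Fin (Dsum nn t)) ℤ_[p]) : Prop :=
  IsBlockUnipotent nn (redMat p r g.val)

/-- Coefficient-wise inclusion `ℤ_p → ℚ_p` on matrices. -/
def toQ {N : ℕ} (M : Matrix (Fin N) (Fin N) ℤ_[p]) : Matrix (Fin N) (Fin N) ℚ_[p] :=
  M.map (fun x => (x : ℚ_[p]))

section BlockTriangular

variable {ι α R S : Type*} [LinearOrder α] {b : ι → α}

theorem _root_.Matrix.BlockTriangular.of_map [Zero R] [Zero S] {f : R → S}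
    (hf : Function.Injective f) (hf0 : f 0 = 0) {M : Matrix ι ι R}
    (h : (M.map f).BlockTriangular b) : M.BlockTriangular b :=
  fun _ _ hij => hf <| by simpa [hf0] using h hij

def _root_.Matrix.blockUpperPart [Zero R] (b : ι → α) (M : Matrix ι ι R) : Matrix ι ι R :=
  fun i j => if b j < b i then 0 else M i j

theorem _root_.Matrix.blockTriangular_blockUpperPart [Zero R] (M : Matrix ι ι R) :
    (M.blockUpperPart b).BlockTriangular b :=
  fun _ _ hij => if_pos hij

theorem _root_.Matrix.map_blockUpperPart [Zero R] [Zero S] {f : R → S} (hf0 : f 0 = 0)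
    {M : Matrix ι ι R} (h : (M.map f).BlockTriangular b) :
    (M.blockUpperPart b).map f = M.map f := by
  ext i j
  by_cases hij : b j < b i
  · simpa [blockUpperPart, hij, hf0] using (h hij).symm
  · simp [blockUpperPart, hij]

end BlockTriangular

theorem _root_.Matrix.isUnit_of_isUnit_map {ι R S : Type*} [Fintype ι] [DecidableEq ι]
    [CommRing R] [CommRing S] (f : R →+* S) [IsLocalHom f] {M : Matrix ι ι R}
    (h : IsUnit (M.map f)) : IsUnit M := by
  rw [isUnit_iff_isUnit_det] at h ⊢
  rw [← RingHom.mapMatrix_apply, ← RingHom.map_det] at h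
  exact (isUnit_map_iff f _).mp h

theorem isLocalHom_toZModPow {r : ℕ} (hr : r ≠ 0) : IsLocalHom (PadicInt.toZModPow (p := p) r) :=
  have : Fact (1 < p ^ r) := ⟨Nat.one_lt_pow hr (Fact.out : p.Prime).one_lt⟩
  .of_surjective _ (ZMod.ringHom_surjective _)

theorem redMat_eq_mapMatrix (r : ℕ) {N : ℕ} (M : Matrix (Fin N) (Fin N) ℤ_[p]) :
    redMat p r M = (PadicInt.toZModPow r).mapMatrix M :=
  rfl

theorem toQ_eq_mapMatrix {N : ℕ} (M : Matrix (Fin N) (Fin N) ℤ_[p]) :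
    toQ p M = (PadicInt.Coe.ringHom (p := p)).mapMatrix M :=
  rfl

theorem isBlockUnipotent_one {t : ℕ} (nn : Fin t → ℕ) {R : Type*} [CommRing R] :
    IsBlockUnipotent nn (1 : Matrix (Fin (Dsum nn t)) (Fin (Dsum nn t)) R) :=
  ⟨blockTriangular_one, fun _ _ _ => one_apply⟩

/-- Over `ℚ_p`, `g h⁻¹ = q` is block upper triangular; being also integral, it stays so
modulo `p ^ r`, and so does `g = (g h⁻¹) h`. -/
theorem memIw0_of_toQ_eq_mul {t : ℕ} {nn : Fin t → ℕ} {r : ℕ}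
    {g h : GL (Fin (Dsum nn t)) ℤ_[p]} {q : GL (Fin (Dsum nn t)) ℚ_[p]}
    (hq : IsBlockUpper nn q.val) (hh : memIw0 p nn r h)
    (heq : toQ p g.val = q.val * toQ p h.val) : memIw0 p nn r g := by
  have hgh : toQ p (g * h⁻¹).val = q.val := by
    simp only [toQ_eq_mapMatrix, Units.val_mul, map_mul] at heq ⊢
    rw [heq, mul_assoc, ← map_mul, ← Units.val_mul, mul_inv_cancel, Units.val_one, map_one,
      mul_one]
  have hgh_int : (g * h⁻¹).val.BlockTriangular (bfun nn) :=
    .of_map (f := fun x : ℤ_[p] => (x : ℚ_[p])) Subtype.val_injective rfl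
      (by rw [IsBlockUpper, ← hgh] at hq; exact hq)
  rw [memIw0, ← inv_mul_cancel_right g h, Units.val_mul, redMat_eq_mapMatrix, map_mul]
  exact (hgh_int.map _).mul hh

/-- Cutting `g` down to its block upper part does not change it modulo `p ^ r`, hence, as
`r ≠ 0`, keeps its determinant a unit; this lift `Q ∈ P(ℤ_p)` gives `g = Q (Q⁻¹ g)` with
`Q⁻¹ g ≡ 1`. -/
theorem exists_eq_mul_of_memIw0 {t : ℕ} {nn : Fin t → ℕ} {r : ℕ} (hr : r ≠ 0)
    {g : GL (Fin (Dsum nn t)) ℤ_[p]} (hg : memIw0 p nn r g) :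
    ∃ (q : GL (Fin (Dsum nn t)) ℚ_[p]) (h : GL (Fin (Dsum nn t)) ℤ_[p]),
      IsBlockUpper nn q.val ∧ memIw p nn r h ∧ toQ p g.val = q.val * toQ p h.val := by
  have := isLocalHom_toZModPow p hr
  set Q := g.val.blockUpperPart (bfun nn)
  have hred : redMat p r Q = redMat p r g.val := map_blockUpperPart (map_zero _) hg
  have hQ : IsUnit Q := by
    refine isUnit_of_isUnit_map (PadicInt.toZModPow r) ?_
    rw [← RingHom.mapMatrix_apply, ← redMat_eq_mapMatrix, hred]
    exact g.isUnit.map (PadicInt.toZModPow r).mapMatrix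
  refine ⟨Units.map (PadicInt.Coe.ringHom (p := p)).mapMatrix.toMonoidHom hQ.unit,
    hQ.unit⁻¹ * g, (blockTriangular_blockUpperPart _).map PadicInt.Coe.ringHom, ?_, ?_⟩
  · have hred_one : redMat p r (hQ.unit⁻¹ * g).val = 1 := by
      simp only [redMat_eq_mapMatrix] at hred ⊢
      rw [Units.val_mul, map_mul, ← hred, ← map_mul, IsUnit.val_inv_mul, map_one]
    rw [memIw, hred_one]
    exact isBlockUnipotent_one nn
  · rw [toQ_eq_mapMatrix, toQ_eq_mapMatrix, Units.coe_map, RingHom.toMonoidHom_eq_coe,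
      MonoidHom.coe_coe, ← map_mul, ← Units.val_mul, mul_inv_cancel_left]

theorem parabolic_mul_iw_inter_integral {t : ℕ} (nn : Fin t → ℕ)
    (r : ℕ) (hr : 1 ≤ r) (g : GL (Fin (Dsum nn t)) ℤ_[p]) :
    (∃ (q : GL (Fin (Dsum nn t)) ℚ_[p]) (h : GL (Fin (Dsum nn t)) ℤ_[p]),
        IsBlockUpper nn q.val ∧ memIw p nn r h ∧ toQ p g.val = q.val * toQ p h.val) ↔
      memIw0 p nn r g :=
  ⟨fun ⟨_, _, hq, hh, heq⟩ => memIw0_of_toQ_eq_mul p hq hh.1 heq,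
    exists_eq_mul_of_memIw0 p (Nat.one_le_iff_ne_zero.mp hr)⟩

end PIw
end
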